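/- Let Γ be a free group of finite rank with generating set S, and let F ⊂ Γ be a finite set with convex hull F̄. Suppose (after translating) that the identity e is a center of F̄. Let γ₀ = e, γ₁, γ₂, ... be any ordering of Γ such that {γ₀,...,γ_n} is connected in the Cayley graph for every n. Then for every n ≥ 1, γ_n·F̄ is not contained in ⋃_{i=0}^{n-1} γ_i·F̄. -/

import Mathlib

open scoped Pointwise

/-- Word length of an element of the free group with respect to the free generators. -/
def wordLen {r : ℕ} (g : FreeGroup (Fin r)) : ℕ := g.toWord.length

/-- The Cayley graph of the free group of rank `r`, with edges `{g, g·sᵢ}`. -/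
def cayley (r : ℕ) : SimpleGraph (FreeGroup (Fin r)) where
  Adj g h := g ≠ h ∧ ∃ i : Fin r, h = g * FreeGroup.of i ∨ g = h * FreeGroup.of i
  symm := by
    constructor
    rintro g h ⟨hne, i, hi⟩
    exact ⟨hne.symm, i, hi.symm⟩
  loopless := by constructor; rintro g ⟨hne, -⟩; exact hne rfl

/-- A subset of the free group is connected if its induced subgraph in the
Cayley graph is connected. -/
def ConnSet {r : ℕ} (K : Set (FreeGroup (Fin r))) : Prop :=
  ((cayley r).induce K).Connected

/-- The ball of radius `n` centered at `v` in the word metric. -/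
def wball {r : ℕ} (v : FreeGroup (Fin r)) (n : ℕ) : Set (FreeGroup (Fin r)) :=
  {g | wordLen (v⁻¹ * g) ≤ n}

/-- `n` is the radius of `K`: the smallest number such that some ball of
radius `n` contains `K`. -/
def IsRadius {r : ℕ} (K : Set (FreeGroup (Fin r))) (n : ℕ) : Prop :=
  (∃ v, K ⊆ wball v n) ∧ ∀ m : ℕ, (∃ v, K ⊆ wball v m) → n ≤ m

/-- The geodesic segment `[v,w]`: all points on the shortest path from `v` to `w`. -/
def seg {r : ℕ} (v w : FreeGroup (Fin r)) : Set (FreeGroup (Fin r)) :=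
  {g | wordLen (v⁻¹ * g) + wordLen (g⁻¹ * w) = wordLen (v⁻¹ * w)}

/-- The extreme points of `K`: elements of `K` of degree 1 in the induced subgraph. -/
def extremePts {r : ℕ} (K : Set (FreeGroup (Fin r))) : Set (FreeGroup (Fin r)) :=
  {f ∈ K | ∃! k, k ∈ K ∧ (cayley r).Adj f k}

/-- `H` is the convex hull of `F`: the smallest connected set containing `F`. -/
def IsHull {r : ℕ} (F H : Set (FreeGroup (Fin r))) : Prop :=
  ConnSet H ∧ F ⊆ H ∧ ∀ C, ConnSet C → F ⊆ C → H ⊆ C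

/-!
Translating by `γₙ⁻¹`, the covering says that `F̄` is covered by the translates `q • F̄` with `q`
in `Q = γₙ⁻¹ {γ₀, …, γₙ₋₁}`. This set is connected and misses `e`, so it lies in one branch of the
Cayley tree at `e`: every `q ∈ Q` is a reduced word beginning with the same letter `a`. If `x ∈ F̄`
does not begin with `a`, then `|q⁻¹ x| = |q| + |x|`, which forces `|x| < rad`; and `|x| = rad - 1`
would force `q = a` and make `a⁻¹ x` a point of `F̄` of length `rad` not beginning with `a`.
Hence `F̄` lies in the ball of radius `rad - 1` about `a`, contradicting the minimality of `rad`.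
-/

theorem Set.subset_iUnion_smul_of_smul_subset {G ι : Type*} [Group G] {K : Set G} {g : G}
    {s : Set ι} {h : ι → G} (hsub : g • K ⊆ ⋃ i ∈ s, h i • K) :
    K ⊆ ⋃ q ∈ g⁻¹ • h '' s, q • K := by
  intro x hx
  obtain ⟨i, hi, hxi⟩ := Set.mem_iUnion₂.1 (hsub (Set.smul_mem_smul_set hx))
  refine Set.mem_iUnion₂.2 ⟨g⁻¹ * h i, Set.smul_mem_smul_set (Set.mem_image_of_mem h hi), ?_⟩
  simpa [smul_smul] using Set.smul_mem_smul_set (a := g⁻¹) hxi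

namespace FreeGroup

variable {α : Type*} [DecidableEq α] {g h : FreeGroup α} {a : α × Bool}

theorem toWord_inv_mul_of_head?_ne (hgh : g.toWord.head? ≠ h.toWord.head?) :
    (g⁻¹ * h).toWord = g⁻¹.toWord ++ h.toWord := by
  rw [toWord_mul, IsReduced.reduce_eq]
  refine List.isChain_append.2 ⟨isReduced_toWord, isReduced_toWord, ?_⟩
  intro x hx y hy hxy
  rw [toWord_inv, invRev, List.getLast?_reverse, List.head?_map] at hx
  obtain ⟨b, hb, rfl⟩ := Option.mem_map.1 hx
  by_contra hne
  refine hgh ?_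
  rw [Option.mem_def.1 hb, Option.mem_def.1 hy, Prod.ext (x := b) hxy (by simpa using hne)]

theorem exists_head?_toWord_eq_some (hg : g ≠ 1) : ∃ a, g.toWord.head? = some a :=
  Option.ne_none_iff_exists'.1 fun h => hg (toWord_eq_nil_iff.1 (List.head?_eq_none_iff.1 h))

theorem eq_mk_singleton_of_length_eq_one (hlen : g.toWord.length = 1)
    (hhead : g.toWord.head? = some a) : g = mk [a] := by
  obtain ⟨b, hb⟩ := List.length_eq_one_iff.1 hlen
  rw [hb, List.head?_cons, Option.some_inj] at hhead
  rw [← mk_toWord (x := g), hb, hhead]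

theorem toWord_mk_singleton_inv_mul (hg : g.toWord.head? = some a) :
    ((mk [a])⁻¹ * g).toWord = g.toWord.tail := by
  obtain ⟨t, ht⟩ : ∃ t, g.toWord = a :: t := by
    cases hw : g.toWord with
    | nil => simp [hw] at hg
    | cons b t => simp_all
  have hsplit : g = mk [a] * mk t := by rw [mul_mk, List.singleton_append, ← ht, mk_toWord]
  have hred : IsReduced t := isReduced_toWord.infix (ht ▸ List.infix_cons (List.infix_refl t))
  rw [hsplit, inv_mul_cancel_left, toWord_mk, hred.reduce_eq, ← hsplit, ht, List.tail_cons]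

end FreeGroup

variable {r : ℕ}

theorem mem_wball_one {g : FreeGroup (Fin r)} {n : ℕ} : g ∈ wball 1 n ↔ wordLen g ≤ n := by
  simp [wball]

theorem wordLen_eq_zero_iff {g : FreeGroup (Fin r)} : wordLen g = 0 ↔ g = 1 :=
  FreeGroup.norm_eq_zero

theorem wordLen_pos_of_head?_eq_some {g : FreeGroup (Fin r)} {a : Fin r × Bool}
    (h : g.toWord.head? = some a) : 0 < wordLen g :=
  Nat.pos_of_ne_zero fun h0 => by simp [wordLen_eq_zero_iff.1 h0] at h

theorem wordLen_inv_mul_of_head?_ne {g h : FreeGroup (Fin r)}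
    (hgh : g.toWord.head? ≠ h.toWord.head?) : wordLen (g⁻¹ * h) = wordLen g + wordLen h := by
  simp [wordLen, FreeGroup.toWord_inv_mul_of_head?_ne hgh, FreeGroup.toWord_inv]

theorem wordLen_inv_mul_of_adj {g h : FreeGroup (Fin r)} (hadj : (cayley r).Adj g h) :
    wordLen (g⁻¹ * h) = 1 := by
  obtain ⟨-, i, rfl | rfl⟩ := hadj <;> simp [wordLen, FreeGroup.toWord_inv]

theorem head?_toWord_eq_of_adj {g h : FreeGroup (Fin r)} (hadj : (cayley r).Adj g h)
    (hg : g ≠ 1) (hh : h ≠ 1) : g.toWord.head? = h.toWord.head? := by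
  by_contra hgh
  have hlen := wordLen_inv_mul_of_adj hadj
  rw [wordLen_inv_mul_of_head?_ne hgh] at hlen
  have hg' := Nat.pos_of_ne_zero (mt wordLen_eq_zero_iff.1 hg)
  have hh' := Nat.pos_of_ne_zero (mt wordLen_eq_zero_iff.1 hh)
  omega

theorem ConnSet.nonempty {S : Set (FreeGroup (Fin r))} (hS : ConnSet S) : S.Nonempty :=
  let ⟨⟨x, hx⟩⟩ := SimpleGraph.Connected.nonempty hS
  ⟨x, hx⟩

theorem ConnSet.smul {S : Set (FreeGroup (Fin r))} (hS : ConnSet S) (k : FreeGroup (Fin r)) :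
    ConnSet (k • S) := by
  let mulLeft : cayley r →g cayley r :=
    ⟨(k * ·), fun {g h} ⟨hne, i, hi⟩ =>
      ⟨fun H => hne (mul_left_cancel H), i, hi.imp (by rintro rfl; group) (by rintro rfl; group)⟩⟩
  refine SimpleGraph.Connected.map
    (SimpleGraph.induceHom mulLeft fun x hx => Set.smul_mem_smul_set hx) ?_ hS
  rintro ⟨_, x, hx, rfl⟩
  exact ⟨⟨x, hx⟩, rfl⟩

theorem ConnSet.head?_toWord_eq {S : Set (FreeGroup (Fin r))} (hS : ConnSet S)
    (h1 : (1 : FreeGroup (Fin r)) ∉ S)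
    {x y : FreeGroup (Fin r)} (hx : x ∈ S) (hy : y ∈ S) : x.toWord.head? = y.toWord.head? := by
  suffices key : ∀ u v : S, ((cayley r).induce S).Walk u v →
      u.1.toWord.head? = v.1.toWord.head? from
    let ⟨p⟩ := SimpleGraph.Connected.preconnected hS ⟨x, hx⟩ ⟨y, hy⟩
    key _ _ p
  intro u v p
  induction p with
  | nil => rfl
  | cons hadj _ ih =>
    exact (head?_toWord_eq_of_adj hadj (ne_of_mem_of_not_mem (Subtype.prop _) h1)
      (ne_of_mem_of_not_mem (Subtype.prop _) h1)).trans ih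

section BranchCover

variable {K Q : Set (FreeGroup (Fin r))} {rad : ℕ} {a : Fin r × Bool}

theorem exists_inv_mul_mem_of_subset_iUnion_smul (hcover : K ⊆ ⋃ q ∈ Q, q • K)
    {x : FreeGroup (Fin r)} (hx : x ∈ K) : ∃ q ∈ Q, q⁻¹ * x ∈ K := by
  obtain ⟨q, hq, hxq⟩ := Set.mem_iUnion₂.1 (hcover hx)
  exact ⟨q, hq, Set.mem_smul_set_iff_inv_smul_mem.1 hxq⟩

theorem wordLen_lt_of_head?_ne (hK : K ⊆ wball 1 rad) (hQ : ∀ q ∈ Q, q.toWord.head? = some a)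
    (hcover : K ⊆ ⋃ q ∈ Q, q • K) {x : FreeGroup (Fin r)} (hx : x ∈ K)
    (hxa : x.toWord.head? ≠ some a) : wordLen x < rad := by
  obtain ⟨q, hq, hqx⟩ := exists_inv_mul_mem_of_subset_iUnion_smul hcover hx
  have hlen := mem_wball_one.1 (hK hqx)
  rw [wordLen_inv_mul_of_head?_ne (by rw [hQ q hq]; exact hxa.symm)] at hlen
  have := wordLen_pos_of_head?_eq_some (hQ q hq)
  omega

theorem wordLen_add_one_lt_of_head?_ne (hK : K ⊆ wball 1 rad)
    (hQ : ∀ q ∈ Q, q.toWord.head? = some a) (hcover : K ⊆ ⋃ q ∈ Q, q • K)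
    {x : FreeGroup (Fin r)} (hx : x ∈ K) (hxa : x.toWord.head? ≠ some a) :
    wordLen x + 1 < rad := by
  obtain ⟨q, hq, hqx⟩ := exists_inv_mul_mem_of_subset_iUnion_smul hcover hx
  have hqa := hQ q hq
  have hqx_ne : q.toWord.head? ≠ x.toWord.head? := by rw [hqa]; exact hxa.symm
  have hlen := wordLen_inv_mul_of_head?_ne hqx_ne
  have hle := mem_wball_one.1 (hK hqx)
  have hlt := wordLen_lt_of_head?_ne hK hQ hcover hx hxa
  have hqpos := wordLen_pos_of_head?_eq_some hqa
  by_contra! hge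
  have hq1 : q = FreeGroup.mk [a] :=
    FreeGroup.eq_mk_singleton_of_length_eq_one (show wordLen q = 1 by omega) hqa
  have hword : (q⁻¹ * x).toWord = (a.1, !a.2) :: x.toWord := by
    rw [FreeGroup.toWord_inv_mul_of_head?_ne hqx_ne, hq1]
    simp [FreeGroup.invRev]
  have := wordLen_lt_of_head?_ne hK hQ hcover hqx (by simp [hword, Prod.ext_iff])
  omega

theorem subset_wball_mk_singleton (hK : K ⊆ wball 1 rad) (hQ : ∀ q ∈ Q, q.toWord.head? = some a)
    (hcover : K ⊆ ⋃ q ∈ Q, q • K) : K ⊆ wball (FreeGroup.mk [a]) (rad - 1) := by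
  intro y hy
  have hyK := mem_wball_one.1 (hK hy)
  by_cases hya : y.toWord.head? = some a
  · have : wordLen ((FreeGroup.mk [a])⁻¹ * y) = wordLen y - 1 := by
      rw [wordLen, FreeGroup.toWord_mk_singleton_inv_mul hya, List.length_tail, wordLen]
    simp only [wball, Set.mem_ofPred_eq, this]
    omega
  · have hlen : wordLen ((FreeGroup.mk [a])⁻¹ * y) = 1 + wordLen y := by
      rw [wordLen_inv_mul_of_head?_ne (by simpa [eq_comm] using hya)]
      simp [wordLen]
    have := wordLen_add_one_lt_of_head?_ne hK hQ hcover hy hya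
    simp only [wball, Set.mem_ofPred_eq, hlen]
    omega

theorem not_subset_iUnion_smul_of_head?_eq (hrad : IsRadius K rad) (hK : K ⊆ wball 1 rad)
    (hKne : K.Nonempty) (hQ : ∀ q ∈ Q, q.toWord.head? = some a) : ¬ K ⊆ ⋃ q ∈ Q, q • K := by
  intro hcover
  obtain ⟨x, hx⟩ := hKne
  rcases Nat.eq_zero_or_pos rad with rfl | hpos
  · have hx1 : x = 1 := wordLen_eq_zero_iff.1 (Nat.le_zero.1 (mem_wball_one.1 (hK hx)))
    have := wordLen_lt_of_head?_ne hK hQ hcover hx (by simp [hx1])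
    omega
  · have := hrad.2 (rad - 1) ⟨_, subset_wball_mk_singleton hK hQ hcover⟩
    omega

end BranchCover

theorem translate_hull_not_covered_general {r : ℕ} (F Fbar : Set (FreeGroup (Fin r)))
    (hhull : IsHull F Fbar)
    (rad : ℕ) (hrad : IsRadius Fbar rad) (hcenter : Fbar ⊆ wball 1 rad)
    (γ : ℕ → FreeGroup (Fin r)) (hbij : Function.Bijective γ)
    (hconn : ∀ n : ℕ, ConnSet (γ '' {i | i ≤ n})) :
    ∀ n : ℕ, 1 ≤ n → ¬ (γ n • Fbar ⊆ ⋃ i < n, γ i • Fbar) := by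
  intro n hn hsub
  have hQconn : ConnSet ((γ n)⁻¹ • γ '' Set.Iio n) := by
    rw [show Set.Iio n = {i | i ≤ n - 1} by ext; simp only [Set.mem_Iio, Set.mem_ofPred_eq]; omega]
    exact (hconn (n - 1)).smul _
  have hQ1 : (1 : FreeGroup (Fin r)) ∉ (γ n)⁻¹ • γ '' Set.Iio n := by
    rintro ⟨_, ⟨i, hi, rfl⟩, hi1⟩
    exact (Set.mem_Iio.1 hi).ne (hbij.1 (inv_mul_eq_one.1 hi1).symm)
  obtain ⟨q₀, hq₀⟩ := hQconn.nonempty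
  obtain ⟨a, ha⟩ := FreeGroup.exists_head?_toWord_eq_some (ne_of_mem_of_not_mem hq₀ hQ1)
  exact not_subset_iUnion_smul_of_head?_eq hrad hcenter hhull.1.nonempty
    (fun q hq => (hQconn.head?_toWord_eq hQ1 hq hq₀).trans ha)
    (Set.subset_iUnion_smul_of_smul_subset hsub)

/-- if `e` is a center of the convex hull `F̄` of a finite set `F`, and
`γ₀ = e, γ₁, γ₂, …` is an ordering of the free group such that every initial segment
is connected, then for all `n ≥ 1`, `γₙ·F̄` is not contained in `⋃_{i<n} γᵢ·F̄`. -/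
theorem translate_hull_not_covered {r : ℕ} (F Fbar : Set (FreeGroup (Fin r)))
    (hFfin : F.Finite) (hhull : IsHull F Fbar)
    (rad : ℕ) (hrad : IsRadius Fbar rad) (hcenter : Fbar ⊆ wball 1 rad)
    (γ : ℕ → FreeGroup (Fin r)) (hbij : Function.Bijective γ) (hγ0 : γ 0 = 1)
    (hconn : ∀ n : ℕ, ConnSet (γ '' {i | i ≤ n})) :
    ∀ n : ℕ, 1 ≤ n → ¬ (γ n • Fbar ⊆ ⋃ i < n, γ i • Fbar) :=
  translate_hull_not_covered_general F Fbar hhull rad hrad hcenter γ hbij hconn
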